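/- arXiv:gr-qc/0212085 — 4 statements merged into one kernel-verified Lean document; each statement's English description precedes it below -/
import Mathlib

section
/- Let A be a 2-form on ℝ⁴ (a skew-symmetric bilinear form) and let Â be the associated endomorphism. Set P := Â∘Â − (1/4)·tr(Â∘Â)·id. Then 4·(P∘P) = tr(P∘P)·id. (This is the algebraic Rainich/Collinson condition: the traceless part of the square of any skew-symmetric tensor in 4 dimensions has square proportional to the identity.) -/
open Matrix Real

/-- Spacetime `ℝ⁴` with the standard basis. -/
abbrev V4 : Type := Fin 4 → ℝ

/-- `4×4` real matrices: components of bilinear forms / endomorphisms of `ℝ⁴`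
in the standard basis `(e₀,e₁,e₂,e₃)`. -/
abbrev Mat4 : Type := Matrix (Fin 4) (Fin 4) ℝ

/-- The Minkowski metric `diag(-1,1,1,1)` (it equals its own inverse). -/
noncomputable def ηm : Mat4 := Matrix.diagonal ![-1, 1, 1, 1]

/-- The Minkowski bilinear form `η(x,y) = -x₀y₀ + x₁y₁ + x₂y₂ + x₃y₃`. -/
noncomputable def ηb (x y : V4) : ℝ := x ⬝ᵥ ηm *ᵥ y

/-- A vector `x` is timelike if `η(x,x) < 0`. -/
noncomputable def Timelike (x : V4) : Prop := ηb x x < 0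

/-- Evaluation of the bilinear form with component matrix `B`:
`B(x,y) = Σ xᵅ B_{αβ} yᵝ`. -/
noncomputable def bil (B : Mat4) (x y : V4) : ℝ := x ⬝ᵥ B *ᵥ y

/-- A 2-form is a skew-symmetric bilinear form. -/
noncomputable def IsTwoForm (B : Mat4) : Prop := Bᵀ = -B

/-- The endomorphism `B̂` associated with the bilinear form `B`, i.e. the unique
endomorphism with `η(B̂x, y) = B(x,y)` for all `x, y`.  (Indeed
`ηb (hat B *ᵥ x) y = bil B x y`.) -/
noncomputable def hat (B : Mat4) : Mat4 := ηm * Bᵀ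

/-- The totally antisymmetric Levi-Civita symbol on four indices, `ε₀₁₂₃ = 1`. -/
noncomputable def lc (a b c d : Fin 4) : ℝ :=
  (((b : ℕ) : ℝ) - ((a : ℕ) : ℝ)) * (((c : ℕ) : ℝ) - ((a : ℕ) : ℝ)) *
    (((d : ℕ) : ℝ) - ((a : ℕ) : ℝ)) * (((c : ℕ) : ℝ) - ((b : ℕ) : ℝ)) *
    (((d : ℕ) : ℝ) - ((b : ℕ) : ℝ)) * (((d : ℕ) : ℝ) - ((c : ℕ) : ℝ)) / 12

/-- The Hodge dual of a 2-form:
`(*F)(e_α,e_β) = (1/2) Σ ε_{αβγδ} η^{γμ} η^{δν} F(e_μ,e_ν)`. -/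
noncomputable def hodge (F : Mat4) : Mat4 :=
  Matrix.of fun α β => (1/2) * ∑ γ, ∑ δ, ∑ μ, ∑ ν, lc α β γ δ * ηm γ μ * ηm δ ν * F μ ν

/-- A unitary 2-form: `tr(Û∘Û) = 2` and `tr(Û∘(*U)̂) = 0`. -/
noncomputable def IsUnitary (U : Mat4) : Prop :=
  IsTwoForm U ∧ (hat U * hat U).trace = 2 ∧ (hat U * hat (hodge U)).trace = 0

/-- An endomorphism `L` is η-self-adjoint if `η(Lx,y) = η(x,Ly)` for all `x, y`. -/
noncomputable def SelfAdj (L : Mat4) : Prop := ∀ x y : V4, ηb (L *ᵥ x) y = ηb x (L *ᵥ y)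

/-! Since `Â` is `η`-skew-adjoint, its characteristic polynomial is even, namely
`X⁴ - ½ tr(Â²) X² + det Â` with `det Â = -Pf(A)²`. By Cayley–Hamilton `S = Â²` therefore satisfies
the quadratic relation `S² = ½ tr(S) S + Pf(A)²`, and completing the square shows that
`P = S - ¼ tr(S)` squares to the scalar `(¼ tr S)² + Pf(A)²`. -/

theorem Matrix.natCast_card_smul_eq_trace_smul_one {n K : Type*} [Fintype n] [DecidableEq n]
    [Field K] {M : Matrix n n K} {c : K} (hM : M = c • 1) :
    (Fintype.card n : K) • M = M.trace • 1 := by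
  subst hM
  simp [trace_smul, trace_one, smul_smul, mul_comm]

theorem sub_smul_one_mul_self_of_mul_self_eq {K A : Type*} [CommRing K] [Ring A] [Algebra K A]
    {S : A} {t d : K} (hS : S * S = (2 * t) • S + d • 1) :
    (S - t • 1) * (S - t • 1) = (t ^ 2 + d) • 1 := by
  simp only [sub_mul, mul_sub, smul_mul_assoc, mul_smul_comm, one_mul, mul_one, hS]
  module

def pfaffian4 (A : Mat4) : ℝ := A 0 1 * A 2 3 - A 0 2 * A 1 3 + A 0 3 * A 1 2

namespace IsTwoForm

variable {A : Mat4}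

theorem apply_swap (hA : IsTwoForm A) (i j : Fin 4) : A j i = -A i j :=
  congrFun (congrFun hA i) j

theorem apply_self (hA : IsTwoForm A) (i : Fin 4) : A i i = 0 := by
  linarith [hA.apply_swap i i]

theorem hat_eq (hA : IsTwoForm A) :
    hat A = !![0, A 0 1, A 0 2, A 0 3;
      A 0 1, 0, -A 1 2, -A 1 3;
      A 0 2, A 1 2, 0, -A 2 3;
      A 0 3, A 1 3, A 2 3, 0] := by
  ext i j
  fin_cases i <;> fin_cases j <;>
    simp [hat, ηm, Matrix.mul_apply, Fin.sum_univ_four, hA.apply_self, hA.apply_swap 1 0,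
      hA.apply_swap 2 0, hA.apply_swap 3 0, hA.apply_swap 2 1, hA.apply_swap 3 1, hA.apply_swap 3 2]

theorem hat_mul_self_mul_self (hA : IsTwoForm A) :
    (hat A * hat A) * (hat A * hat A) =
      ((hat A * hat A).trace / 2) • (hat A * hat A) + pfaffian4 A ^ 2 • 1 := by
  rw [hA.hat_eq]
  ext i j
  fin_cases i <;> fin_cases j <;>
    · simp [Matrix.mul_apply, Matrix.trace, Fin.sum_univ_four, pfaffian4]
      ring

end IsTwoForm

/-- The algebraic Rainich/Collinson condition: the traceless part of the square
of any skew-symmetric tensor in 4 dimensions has square proportional to the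
identity. -/
theorem stmt0 (A : Mat4) (hA : IsTwoForm A) (P : Mat4)
    (hP : P = hat A * hat A - ((1/4) * (hat A * hat A).trace) • (1 : Mat4)) :
    (4 : ℝ) • (P * P) = (P * P).trace • (1 : Mat4) := by
  have hS : (hat A * hat A) * (hat A * hat A) =
      (2 * ((1/4) * (hat A * hat A).trace)) • (hat A * hat A) + pfaffian4 A ^ 2 • 1 := by
    rw [hA.hat_mul_self_mul_self]
    ring_nf
  have hPP := hP ▸ sub_smul_one_mul_self_of_mul_self_eq hS
  simpa using Matrix.natCast_card_smul_eq_trace_smul_one hPP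
end

section
/- For every 2-form F on ℝ⁴, the Hodge dual satisfies the square identity (*F)̂∘(*F)̂ = F̂∘F̂ − (1/2)·tr(F̂∘F̂)·id. In particular tr((*F)̂∘(*F)̂) = −tr(F̂∘F̂). -/
open Matrix Real

/-! A 2-form is determined by its electric part `E = (F₀₁, F₀₂, F₀₃)` and magnetic part
`B = (F₂₃, -F₁₃, F₁₂)`. The Hodge dual exchanges them up to sign, `(E, B) ↦ (B, -E)`, and
`F̂∘F̂` is an explicit matrix quadratic in `(E, B)` with trace `2(|E|² - |B|²)`; comparing
the two quadratic matrices gives the square identity, and taking traces (`tr id = 4`) the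
trace identity. -/

def twoForm (a b c d e f : ℝ) : Mat4 :=
  !![0, a, b, c; -a, 0, d, e; -b, -d, 0, f; -c, -e, -f, 0]

lemma IsTwoForm.eq_twoForm {F : Mat4} (hF : IsTwoForm F) :
    F = twoForm (F 0 1) (F 0 2) (F 0 3) (F 1 2) (F 1 3) (F 2 3) := by
  have hskew : ∀ i j, F j i = -F i j := fun i j => congrFun (congrFun hF i) j
  have hdiag : ∀ i, F i i = 0 := fun i => by linarith [hskew i i]
  ext i j
  fin_cases i <;> fin_cases j <;> simp [twoForm, hdiag] <;> exact hskew _ _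

lemma hodge_apply (F : Mat4) (α β : Fin 4) :
    hodge F α β = (1 / 2) * ∑ γ, ∑ δ, lc α β γ δ * ηm γ γ * ηm δ δ * F γ δ := by
  simp [hodge, ηm, Matrix.diagonal_apply, mul_assoc]

lemma hodge_twoForm (a b c d e f : ℝ) :
    hodge (twoForm a b c d e f) = twoForm f (-e) d (-c) b (-a) := by
  ext i j
  rw [hodge_apply]
  fin_cases i <;> fin_cases j <;> simp [lc, ηm, twoForm, Fin.sum_univ_four] <;> ring

lemma hat_twoForm_mul_self (a b c d e f : ℝ) :
    hat (twoForm a b c d e f) * hat (twoForm a b c d e f) =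
      !![a ^ 2 + b ^ 2 + c ^ 2, b * d + c * e, c * f - a * d, -(a * e + b * f);
        -(b * d + c * e), a ^ 2 - d ^ 2 - e ^ 2, a * b - e * f, a * c + d * f;
        a * d - c * f, a * b - e * f, b ^ 2 - d ^ 2 - f ^ 2, b * c - d * e;
        a * e + b * f, a * c + d * f, b * c - d * e, c ^ 2 - e ^ 2 - f ^ 2] := by
  ext i j
  fin_cases i <;> fin_cases j <;>
    simp [hat, ηm, twoForm, Matrix.mul_apply, Fin.sum_univ_four] <;> ring

lemma trace_hat_twoForm_mul_self (a b c d e f : ℝ) :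
    (hat (twoForm a b c d e f) * hat (twoForm a b c d e f)).trace =
      2 * (a ^ 2 + b ^ 2 + c ^ 2) - 2 * (d ^ 2 + e ^ 2 + f ^ 2) := by
  rw [hat_twoForm_mul_self]
  simp only [trace, diag_apply, of_apply, cons_val', cons_val_fin_one, Fin.sum_univ_four,
    cons_val_zero, cons_val_one, cons_val]
  ring

lemma hat_hodge_twoForm_mul_self (a b c d e f : ℝ) :
    hat (hodge (twoForm a b c d e f)) * hat (hodge (twoForm a b c d e f)) =
      hat (twoForm a b c d e f) * hat (twoForm a b c d e f) -
        ((1 / 2) * (hat (twoForm a b c d e f) * hat (twoForm a b c d e f)).trace) • 1 := by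
  rw [trace_hat_twoForm_mul_self, hodge_twoForm, hat_twoForm_mul_self, hat_twoForm_mul_self]
  ext i j
  fin_cases i <;> fin_cases j <;> simp <;> ring

lemma IsTwoForm.hat_hodge_mul_self {F : Mat4} (hF : IsTwoForm F) :
    hat (hodge F) * hat (hodge F) =
      hat F * hat F - ((1 / 2) * (hat F * hat F).trace) • (1 : Mat4) := by
  rw [hF.eq_twoForm]
  exact hat_hodge_twoForm_mul_self _ _ _ _ _ _

lemma trace_sub_half_trace_smul_one (X : Mat4) :
    (X - ((1 / 2) * X.trace) • (1 : Mat4)).trace = -X.trace := by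
  rw [trace_sub, trace_smul, trace_one, Fintype.card_fin, smul_eq_mul]
  ring

/-- The Hodge dual square identity
`(*F)̂∘(*F)̂ = F̂∘F̂ - (1/2)tr(F̂∘F̂)·id`, and `tr((*F)̂∘(*F)̂) = -tr(F̂∘F̂)`. -/
theorem stmt1 (F : Mat4) (hF : IsTwoForm F) :
    hat (hodge F) * hat (hodge F) =
      hat F * hat F - ((1/2) * (hat F * hat F).trace) • (1 : Mat4) ∧
    (hat (hodge F) * hat (hodge F)).trace = -(hat F * hat F).trace := by
  refine ⟨hF.hat_hodge_mul_self, ?_⟩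
  rw [hF.hat_hodge_mul_self, trace_sub_half_trace_smul_one]
end

section
/- Every regular 2-form admits a canonical form: if F is a 2-form on ℝ⁴ whose invariants tr(F̂∘F̂) and tr(F̂∘(*F)̂) do not both vanish, then there exist real numbers φ, ψ and a unitary 2-form U (i.e. tr(Û∘Û) = 2 and tr(Û∘(*U)̂) = 0) such that F = e^φ·(cos ψ · U + sin ψ · (*U)). -/
open Matrix Real

lemma IsTwoForm.exists_eq_twoForm {F : Mat4} (hF : IsTwoForm F) :
    ∃ a b c d e f : ℝ, F = twoForm a b c d e f := by
  refine ⟨F 0 1, F 0 2, F 0 3, F 1 2, F 1 3, F 2 3, ?_⟩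
  ext i j
  have hji : F j i = -F i j := by simpa using congrFun (congrFun hF i) j
  fin_cases i <;> fin_cases j <;> simp [twoForm] at hji ⊢ <;> linarith

lemma isTwoForm_twoForm (a b c d e f : ℝ) : IsTwoForm (twoForm a b c d e f) := by
  ext i j
  fin_cases i <;> fin_cases j <;> simp [twoForm]

lemma neg_twoForm (a b c d e f : ℝ) :
    -twoForm a b c d e f = twoForm (-a) (-b) (-c) (-d) (-e) (-f) := by
  ext i j
  fin_cases i <;> fin_cases j <;> simp [twoForm]

lemma hodge_add (F G : Mat4) : hodge (F + G) = hodge F + hodge G := by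
  ext α β
  simp only [hodge, of_apply, Matrix.add_apply, mul_add, Finset.sum_add_distrib]

lemma hodge_smul (c : ℝ) (F : Mat4) : hodge (c • F) = c • hodge F := by
  ext α β
  simp only [hodge, of_apply, Matrix.smul_apply, smul_eq_mul, Finset.mul_sum, mul_left_comm c]

lemma isTwoForm_hodge {F : Mat4} (hF : IsTwoForm F) : IsTwoForm (hodge F) := by
  obtain ⟨a, b, c, d, e, f, rfl⟩ := hF.exists_eq_twoForm
  rw [hodge_twoForm]
  exact isTwoForm_twoForm _ _ _ _ _ _

lemma hodge_hodge {F : Mat4} (hF : IsTwoForm F) : hodge (hodge F) = -F := by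
  obtain ⟨a, b, c, d, e, f, rfl⟩ := hF.exists_eq_twoForm
  simp only [hodge_twoForm, neg_twoForm]

noncomputable def traceForm (F G : Mat4) : ℝ := (hat F * hat G).trace

lemma traceForm_comm (F G : Mat4) : traceForm F G = traceForm G F :=
  trace_mul_comm _ _

lemma hat_add (F G : Mat4) : hat (F + G) = hat F + hat G := by
  simp only [hat, transpose_add, Matrix.mul_add]

lemma hat_smul (c : ℝ) (F : Mat4) : hat (c • F) = c • hat F := by
  simp only [hat, transpose_smul, Matrix.mul_smul]

@[simp] lemma traceForm_add_left (F G H : Mat4) :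
    traceForm (F + G) H = traceForm F H + traceForm G H := by
  simp only [traceForm, hat_add, Matrix.add_mul, trace_add]

@[simp] lemma traceForm_add_right (F G H : Mat4) :
    traceForm F (G + H) = traceForm F G + traceForm F H := by
  simp only [traceForm, hat_add, Matrix.mul_add, trace_add]

@[simp] lemma traceForm_smul_left (c : ℝ) (F G : Mat4) :
    traceForm (c • F) G = c * traceForm F G := by
  simp only [traceForm, hat_smul, Matrix.smul_mul, trace_smul, smul_eq_mul]

@[simp] lemma traceForm_smul_right (c : ℝ) (F G : Mat4) :
    traceForm F (c • G) = c * traceForm F G := by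
  simp only [traceForm, hat_smul, Matrix.mul_smul, trace_smul, smul_eq_mul]

@[simp] lemma traceForm_neg_right (F G : Mat4) : traceForm F (-G) = -traceForm F G := by
  simpa using traceForm_smul_right (-1) F G

lemma traceForm_twoForm (a b c d e f a' b' c' d' e' f' : ℝ) :
    traceForm (twoForm a b c d e f) (twoForm a' b' c' d' e' f') =
      2 * (a * a' + b * b' + c * c') - 2 * (d * d' + e * e' + f * f') := by
  simp only [traceForm, trace, hat, ηm, twoForm, diag_apply, mul_apply, transpose_apply, of_apply,
    cons_val', cons_val_fin_one, Fin.sum_univ_four, Fin.isValue, cons_val_zero, cons_val_one, cons_val,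
    mul_zero, zero_add, diagonal_apply_eq, neg_mul, one_mul, ne_eq, zero_ne_one, not_false_eq_true,
    diagonal_apply_ne, zero_mul, add_zero, Fin.reduceEq, mul_neg, one_ne_zero, neg_zero, neg_neg]
  ring

lemma traceForm_hodge_hodge {F G : Mat4} (hF : IsTwoForm F) (hG : IsTwoForm G) :
    traceForm (hodge F) (hodge G) = -traceForm F G := by
  obtain ⟨a, b, c, d, e, f, rfl⟩ := hF.exists_eq_twoForm
  obtain ⟨a', b', c', d', e', f', rfl⟩ := hG.exists_eq_twoForm
  rw [hodge_twoForm, hodge_twoForm, traceForm_twoForm, traceForm_twoForm]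
  ring

noncomputable def csmul (w : ℂ) (F : Mat4) : Mat4 := w.re • F + w.im • hodge F

lemma isTwoForm_csmul {F : Mat4} (hF : IsTwoForm F) (w : ℂ) : IsTwoForm (csmul w F) := by
  have hdual : (hodge F)ᵀ = -hodge F := isTwoForm_hodge hF
  rw [IsTwoForm] at hF ⊢
  rw [csmul, transpose_add, transpose_smul, transpose_smul, hF, hdual, smul_neg, smul_neg,
    neg_add]

lemma hodge_csmul {F : Mat4} (hF : IsTwoForm F) (w : ℂ) :
    hodge (csmul w F) = w.re • hodge F - w.im • F := by
  rw [csmul, hodge_add, hodge_smul, hodge_smul, hodge_hodge hF, smul_neg, sub_eq_add_neg]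

lemma csmul_one (F : Mat4) : csmul 1 F = F := by
  simp [csmul]

lemma csmul_csmul {F : Mat4} (hF : IsTwoForm F) (v w : ℂ) :
    csmul v (csmul w F) = csmul (v * w) F := by
  rw [csmul, hodge_csmul hF, csmul, csmul]
  ext i j
  simp only [Matrix.add_apply, Matrix.sub_apply, Matrix.smul_apply, smul_eq_mul, Complex.mul_re,
    Complex.mul_im]
  ring

lemma csmul_exp (z : ℂ) (F : Mat4) :
    csmul (Complex.exp z) F = Real.exp z.re • (Real.cos z.im • F + Real.sin z.im • hodge F) := by
  rw [csmul, Complex.exp_re, Complex.exp_im, smul_add, smul_smul, smul_smul]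

noncomputable def complexInvariant (F : Mat4) : ℂ := ⟨traceForm F F, traceForm F (hodge F)⟩

lemma complexInvariant_csmul {F : Mat4} (hF : IsTwoForm F) (w : ℂ) :
    complexInvariant (csmul w F) = (starRingEnd ℂ w) ^ 2 * complexInvariant F := by
  have hSS := traceForm_hodge_hodge hF hF
  have hSF := traceForm_comm (hodge F) F
  apply Complex.ext
  · simp only [complexInvariant, csmul, traceForm_add_right, traceForm_smul_right,
      traceForm_add_left, traceForm_smul_left, hSF, hSS, sq, Complex.mul_re, Complex.conj_re,
      Complex.conj_im, Complex.mul_im]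
    ring
  · simp only [complexInvariant]
    rw [hodge_csmul hF]
    simp only [csmul, sub_eq_add_neg, traceForm_add_right, traceForm_smul_right, traceForm_add_left,
      traceForm_smul_left, hSS, traceForm_neg_right, hSF, sq, Complex.mul_im, Complex.mul_re,
      Complex.conj_re, Complex.conj_im]
    ring

lemma isUnitary_of_complexInvariant_eq_two {U : Mat4} (hU : IsTwoForm U)
    (h : complexInvariant U = 2) : IsUnitary U :=
  ⟨hU, congrArg Complex.re h, by simpa [complexInvariant, traceForm] using congrArg Complex.im h⟩

/-- Canonical form of a regular 2-form: `F = e^φ(cos ψ · U + sin ψ · *U)`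
for some unitary 2-form `U` and real numbers `φ, ψ`. -/
theorem stmt4 (F : Mat4) (hF : IsTwoForm F)
    (hreg : ¬((hat F * hat F).trace = 0 ∧ (hat F * hat (hodge F)).trace = 0)) :
    ∃ (φ ψ : ℝ) (U : Mat4), IsUnitary U ∧
      F = Real.exp φ • (Real.cos ψ • U + Real.sin ψ • hodge U) := by
  have hz : complexInvariant F ≠ 0 := fun h =>
    hreg ⟨congrArg Complex.re h, congrArg Complex.im h⟩
  obtain ⟨s, hs⟩ := IsAlgClosed.exists_pow_nat_eq (2 / complexInvariant F) two_pos
  have hs0 : s ≠ 0 := by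
    rintro rfl
    exact div_ne_zero two_ne_zero hz (hs.symm.trans (zero_pow two_ne_zero))
  set w := starRingEnd ℂ s
  have hw0 : w ≠ 0 := by simpa [w] using hs0
  refine ⟨(Complex.log w⁻¹).re, (Complex.log w⁻¹).im, csmul w F,
    isUnitary_of_complexInvariant_eq_two (isTwoForm_csmul hF w) ?_, ?_⟩
  · rw [complexInvariant_csmul hF, Complex.conj_conj, hs, div_mul_cancel₀ _ hz]
  · rw [← csmul_exp, Complex.exp_log (inv_ne_zero hw0), csmul_csmul hF, inv_mul_cancel₀ hw0,
      csmul_one]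
end

section
/- A unitary 2-form determines a 2+2 almost-product structure: if U is a unitary 2-form on ℝ⁴, then v := Û∘Û and h := −(*U)̂∘(*U)̂ satisfy: v + h = id, v∘v = v, h∘h = h, v∘h = h∘v = 0, tr v = tr h = 2, both v and h are η-self-adjoint, η restricted to the range of v is nondegenerate of signature (−,+) (a timelike 2-plane), η restricted to the range of h is positive definite (a spacelike 2-plane), and the structure tensor Π := v − h is an η-self-adjoint involution (Π∘Π = id) with tr Π = 0. -/
open Matrix Real

/-! ### Auxiliary material -/

def Uex (a b c d e f : ℝ) : Mat4 := !![0,a,b,c;-a,0,d,e;-b,-d,0,f;-c,-e,-f,0]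

lemma fin3 : ((3:Fin 4):ℕ) = 3 := rfl

set_option maxHeartbeats 1000000 in
lemma hodge_Uex (a b c d e f : ℝ) :
    hodge (Uex a b c d e f) = Uex f (-e) d (-c) b (-a) := by
  ext i j
  fin_cases i <;> fin_cases j <;>
    simp [hodge, Uex, lc, ηm, Matrix.diagonal, Fin.sum_univ_four, fin3]
  all_goals ring

def AU (a b c d e f : ℝ) : Mat4 := !![0,a,b,c;a,0,-d,-e;b,d,0,-f;c,e,f,0]
def BU (a b c d e f : ℝ) : Mat4 := !![0,f,-e,d;f,0,c,-b;-e,-c,0,a;d,b,-a,0]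

lemma hat_Uex (a b c d e f : ℝ) :
    hat (Uex a b c d e f) = AU a b c d e f := by
  ext i j
  fin_cases i <;> fin_cases j <;>
    simp [hat, Uex, AU, ηm, Matrix.diagonal, Matrix.mul_apply, Matrix.transpose_apply,
      Matrix.vecHead, Matrix.vecTail, Fin.sum_univ_four]

lemma AU_flip (a b c d e f : ℝ) :
    AU f (-e) d (-c) b (-a) = BU a b c d e f := by
  ext i j
  fin_cases i <;> fin_cases j <;> simp [AU, BU]

set_option maxHeartbeats 1000000 in
lemma key1 (a b c d e f : ℝ) :
    AU a b c d e f * AU a b c d e f - BU a b c d e f * BU a b c d e f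
      = (a^2+b^2+c^2-d^2-e^2-f^2) • (1 : Mat4) := by
  ext i j
  fin_cases i <;> fin_cases j <;>
    (simp [AU, BU, Matrix.mul_apply, Matrix.one_apply, Fin.sum_univ_four]; try ring)

set_option maxHeartbeats 1000000 in
lemma key2 (a b c d e f : ℝ) :
    AU a b c d e f * BU a b c d e f = (a*f-b*e+c*d) • (1 : Mat4) := by
  ext i j
  fin_cases i <;> fin_cases j <;>
    (simp [AU, BU, Matrix.mul_apply, Matrix.one_apply, Fin.sum_univ_four]; try ring)

set_option maxHeartbeats 1000000 in
lemma key2' (a b c d e f : ℝ) :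
    BU a b c d e f * AU a b c d e f = (a*f-b*e+c*d) • (1 : Mat4) := by
  ext i j
  fin_cases i <;> fin_cases j <;>
    (simp [AU, BU, Matrix.mul_apply, Matrix.one_apply, Fin.sum_univ_four]; try ring)

lemma tr1 (a b c d e f : ℝ) :
    (AU a b c d e f * AU a b c d e f).trace = 2*(a^2+b^2+c^2-d^2-e^2-f^2) := by
  simp [AU, Matrix.trace, Matrix.diag, Matrix.mul_apply, Fin.sum_univ_four]; ring

lemma tr2 (a b c d e f : ℝ) :
    (AU a b c d e f * BU a b c d e f).trace = 4*(a*f-b*e+c*d) := by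
  simp [AU, BU, Matrix.trace, Matrix.diag, Matrix.mul_apply, Fin.sum_univ_four]; ring

lemma U_eq (U : Mat4) (hU : IsTwoForm U) :
    U = Uex (U 0 1) (U 0 2) (U 0 3) (U 1 2) (U 1 3) (U 2 3) := by
  have hw : ∀ i j : Fin 4, U j i = -U i j := by
    intro i j
    have := congrFun (congrFun hU i) j
    simpa [Matrix.transpose_apply] using this
  ext i j
  fin_cases i <;> fin_cases j <;> simp [Uex] <;>
    first
      | linarith [hw 0 0] | linarith [hw 1 1] | linarith [hw 2 2] | linarith [hw 3 3]
      | linarith [hw 0 1] | linarith [hw 0 2] | linarith [hw 0 3]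
      | linarith [hw 1 2] | linarith [hw 1 3] | linarith [hw 2 3]

/-! basic facts about ηb -/

lemma ηb_eq (x y : V4) :
    ηb x y = -(x 0 * y 0) + x 1 * y 1 + x 2 * y 2 + x 3 * y 3 := by
  simp [ηb, ηm, Matrix.mulVec, dotProduct, Matrix.diagonal, Fin.sum_univ_four]
  try ring

lemma ηb_comm (x y : V4) : ηb x y = ηb y x := by
  simp only [ηb_eq, Pi.add_apply, Pi.sub_apply, Pi.neg_apply, Pi.smul_apply, smul_eq_mul]; ring

lemma ηb_zero_right (x : V4) : ηb x (0 : V4) = 0 := by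
  simp [ηb_eq]

lemma ηb_zero_zero : ηb (0 : V4) (0 : V4) = 0 := by
  simp [ηb_eq]

lemma ηb_add_add (x y : V4) : ηb (x + y) (x + y) = ηb x x + 2*ηb x y + ηb y y := by
  simp only [ηb_eq, Pi.add_apply, Pi.sub_apply, Pi.neg_apply, Pi.smul_apply, smul_eq_mul]; ring

lemma ηb_expand (x y : V4) (t : ℝ) :
    ηb (x + t • y) (x + t • y) = ηb x x + 2*t*ηb x y + t^2*ηb y y := by
  simp only [ηb_eq, Pi.add_apply, Pi.sub_apply, Pi.neg_apply, Pi.smul_apply, smul_eq_mul]; ring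

lemma ηb_smul_smul (t : ℝ) (x : V4) : ηb (t • x) (t • x) = t^2 * ηb x x := by
  simp only [ηb_eq, Pi.add_apply, Pi.sub_apply, Pi.neg_apply, Pi.smul_apply, smul_eq_mul]; ring

lemma ηb_comb (z x y u : V4) (p q : ℝ) :
    ηb (z + p • x - q • y) u = ηb z u + p * ηb x u - q * ηb y u := by
  simp only [ηb_eq, Pi.add_apply, Pi.sub_apply, Pi.neg_apply, Pi.smul_apply, smul_eq_mul]; ring

lemma eta_self_zero (z : V4) (hz : ∀ u : V4, ηb z u = 0) : z = 0 := by
  funext i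
  fin_cases i
  · have := hz ![1,0,0,0]; simp [ηb_eq] at this; simpa using this
  · have := hz ![0,1,0,0]; simp [ηb_eq] at this; simpa using this
  · have := hz ![0,0,1,0]; simp [ηb_eq] at this; simpa using this
  · have := hz ![0,0,0,1]; simp [ηb_eq] at this; simpa using this

/-- orthogonal complement of a timelike vector contains no causal vector -/
lemma perp_time (x w : V4) (hx : ηb x x < 0) (hxw : ηb x w = 0) (hw : w ≠ 0) :
    0 < ηb w w := by
  rw [ηb_eq] at hx hxw ⊢
  by_cases hW : w 1 = 0 ∧ w 2 = 0 ∧ w 3 = 0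
  · obtain ⟨h1, h2, h3⟩ := hW
    have hx0 : x 0 ≠ 0 := by
      intro h0
      rw [h0] at hx
      nlinarith [sq_nonneg (x 1), sq_nonneg (x 2), sq_nonneg (x 3)]
    have hw0 : w 0 = 0 := by
      rw [h1, h2, h3] at hxw
      have : x 0 * w 0 = 0 := by linarith
      rcases mul_eq_zero.mp this with h | h
      · exact absurd h hx0
      · exact h
    exact absurd (funext fun i => by fin_cases i <;> simp [h1, h2, h3, hw0]) hw
  · have hW2 : 0 < w 1 ^ 2 + w 2 ^ 2 + w 3 ^ 2 := by
      rcases not_and_or.mp hW with h | h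
      · nlinarith [sq_nonneg (w 2), sq_nonneg (w 3), sq_nonneg (w 1),
          (pow_pos (abs_pos.mpr h) 2 : (0:ℝ) < |w 1| ^ 2), sq_abs (w 1)]
      · rcases not_and_or.mp h with h | h
        · nlinarith [sq_nonneg (w 1), sq_nonneg (w 3),
            (pow_pos (abs_pos.mpr h) 2 : (0:ℝ) < |w 2| ^ 2), sq_abs (w 2)]
        · nlinarith [sq_nonneg (w 1), sq_nonneg (w 2),
            (pow_pos (abs_pos.mpr h) 2 : (0:ℝ) < |w 3| ^ 2), sq_abs (w 3)]
    by_contra hcon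
    push_neg at hcon
    have h1 : (0:ℝ) < x 0 * x 0 - (x 1 * x 1 + x 2 * x 2 + x 3 * x 3) := by linarith
    have heq0 : x 0 * w 0 = x 1 * w 1 + x 2 * w 2 + x 3 * w 3 := by linarith
    have heq : (x 0 * w 0)^2 = (x 1 * w 1 + x 2 * w 2 + x 3 * w 3)^2 := by rw [heq0]
    have hs2 : (0:ℝ) ≤ w 0 * w 0 - (w 1 * w 1 + w 2 * w 2 + w 3 * w 3) := by linarith
    nlinarith [sq_nonneg (x 1 * w 2 - x 2 * w 1), sq_nonneg (x 1 * w 3 - x 3 * w 1),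
      sq_nonneg (x 2 * w 3 - x 3 * w 2), heq,
      mul_pos h1 (show (0:ℝ) < w 1 * w 1 + w 2 * w 2 + w 3 * w 3 by nlinarith [hW2]),
      mul_nonneg (mul_self_nonneg (x 0)) hs2]

lemma hat_eval (W : Mat4) (x y : V4) : ηb (hat W *ᵥ x) y = bil W x y := by
  simp [ηb, bil, hat, ηm, Matrix.diagonal, Matrix.mulVec, dotProduct,
    Matrix.mul_apply, Matrix.transpose_apply, Fin.sum_univ_four]
  ring

lemma bil_Uex_skew (a b c d e f : ℝ) (x y : V4) :
    bil (Uex a b c d e f) x y = -bil (Uex a b c d e f) y x := by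
  simp [bil, Uex, Matrix.mulVec, dotProduct, Fin.sum_univ_four]
  ring

lemma mem_range_proj (M : Mat4) (hM : M * M = M) (z : V4) :
    z ∈ LinearMap.range M.mulVecLin ↔ M *ᵥ z = z := by
  constructor
  · rintro ⟨w, rfl⟩
    rw [Matrix.mulVecLin_apply, Matrix.mulVec_mulVec, hM]
  · intro hz
    exact ⟨z, by rw [Matrix.mulVecLin_apply, hz]⟩

lemma dot3 (M : Mat4) (x y : V4) :
    (M *ᵥ x) ⬝ᵥ (ηm *ᵥ y) = x ⬝ᵥ ((Mᵀ * ηm) *ᵥ y) := by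
  simp [ηm, Matrix.diagonal, Matrix.mulVec, dotProduct, Matrix.mul_apply,
    Matrix.transpose_apply, Fin.sum_univ_four]
  ring

lemma selfAdj_of (L : Mat4) (hL : Lᵀ * ηm = ηm * L) : SelfAdj L := by
  intro x y
  show (L *ᵥ x) ⬝ᵥ (ηm *ᵥ y) = x ⬝ᵥ (ηm *ᵥ (L *ᵥ y))
  rw [dot3, hL, ← Matrix.mulVec_mulVec]

lemma sa_of_sq (M : Mat4) (hM : Mᵀ * ηm = -(ηm * M)) :
    (M * M)ᵀ * ηm = ηm * (M * M) := by
  rw [Matrix.transpose_mul, Matrix.mul_assoc, hM, mul_neg, ← Matrix.mul_assoc, hM,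
    neg_mul, neg_neg, Matrix.mul_assoc]

lemma skewrelA (a b c d e f : ℝ) :
    (AU a b c d e f)ᵀ * ηm = -(ηm * AU a b c d e f) := by
  ext i j
  fin_cases i <;> fin_cases j <;>
    simp [AU, ηm, Matrix.diagonal, Matrix.mul_apply, Matrix.transpose_apply,
      Matrix.vecHead, Matrix.vecTail, Fin.sum_univ_four]

lemma skewrelB (a b c d e f : ℝ) :
    (BU a b c d e f)ᵀ * ηm = -(ηm * BU a b c d e f) := by
  ext i j
  fin_cases i <;> fin_cases j <;>
    simp [BU, ηm, Matrix.diagonal, Matrix.mul_apply, Matrix.transpose_apply,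
      Matrix.vecHead, Matrix.vecTail, Fin.sum_univ_four]

/-! ### Main theorem -/

/-- A unitary 2-form `U` determines a 2+2 almost-product structure via the
projectors `v = Û∘Û` and `h = -(*U)̂∘(*U)̂`, with structure tensor `Π = v - h`. -/
theorem stmt5 (U : Mat4) (hU : IsUnitary U) (v h Pm : Mat4)
    (hv : v = hat U * hat U) (hh : h = -(hat (hodge U) * hat (hodge U)))
    (hPm : Pm = v - h) :
    v + h = 1 ∧ v * v = v ∧ h * h = h ∧ v * h = 0 ∧ h * v = 0 ∧
    v.trace = 2 ∧ h.trace = 2 ∧ SelfAdj v ∧ SelfAdj h ∧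
    (∃ x y : V4, ηb x x = -1 ∧ ηb y y = 1 ∧ ηb x y = 0 ∧
      LinearMap.range v.mulVecLin = Submodule.span ℝ {x, y}) ∧
    (∀ z ∈ LinearMap.range h.mulVecLin, z ≠ 0 → 0 < ηb z z) ∧
    SelfAdj Pm ∧ Pm * Pm = 1 ∧ Pm.trace = 0 := by
  obtain ⟨htf, htrace1, htrace2⟩ := hU
  obtain ⟨a, b, c, d, e, f, rfl⟩ :
      ∃ a b c d e f, U = Uex a b c d e f := ⟨_, _, _, _, _, _, U_eq U htf⟩
  have hA : hat (Uex a b c d e f) = AU a b c d e f := hat_Uex a b c d e f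
  have hB : hat (hodge (Uex a b c d e f)) = BU a b c d e f := by
    rw [hodge_Uex, hat_Uex, AU_flip]
  set A := AU a b c d e f with hAdef
  set B := BU a b c d e f with hBdef
  rw [hA] at hv htrace1 htrace2
  rw [hB] at hh htrace2
  -- scalar invariants
  have hs : a^2+b^2+c^2-d^2-e^2-f^2 = 1 := by
    have := tr1 a b c d e f
    rw [htrace1] at this; linarith
  have ht : a*f-b*e+c*d = 0 := by
    have := tr2 a b c d e f
    rw [htrace2] at this; linarith
  have hAB : A * B = 0 := by rw [key2 a b c d e f, ht, zero_smul]
  have hBA : B * A = 0 := by rw [key2' a b c d e f, ht, zero_smul]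
  have hvh1 : v + h = 1 := by
    rw [hv, hh, ← sub_eq_add_neg, key1 a b c d e f, hs, one_smul]
  have hAABB : (A * A) * (B * B) = 0 := by
    rw [Matrix.mul_assoc, ← Matrix.mul_assoc A B B, hAB, Matrix.zero_mul,
      Matrix.mul_zero]
  have hBBAA : (B * B) * (A * A) = 0 := by
    rw [Matrix.mul_assoc, ← Matrix.mul_assoc B A A, hBA, Matrix.zero_mul,
      Matrix.mul_zero]
  have hvh0 : v * h = 0 := by rw [hv, hh, mul_neg, hAABB, neg_zero]
  have hhv0 : h * v = 0 := by rw [hv, hh, neg_mul, hBBAA, neg_zero]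
  have hvv : v * v = v := by
    have h1 : v * (v + h) = v * 1 := by rw [hvh1]
    rwa [mul_add, hvh0, add_zero, mul_one] at h1
  have hhh : h * h = h := by
    have h1 : h * (v + h) = h * 1 := by rw [hvh1]
    rwa [mul_add, hhv0, zero_add, mul_one] at h1
  have htrv : v.trace = 2 := by rw [hv]; exact htrace1
  have htrh : h.trace = 2 := by
    have h1 : h = 1 - v := by rw [← hvh1]; abel
    rw [h1, Matrix.trace_sub, Matrix.trace_one, htrv]
    norm_num
  have hsaV : SelfAdj v := by
    apply selfAdj_of
    rw [hv]; exact sa_of_sq A (skewrelA a b c d e f)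
  have hsaH : SelfAdj h := by
    apply selfAdj_of
    rw [hh, Matrix.transpose_neg, Matrix.neg_mul, sa_of_sq B (skewrelB a b c d e f),
      Matrix.mul_neg]
  have hsaPm : SelfAdj Pm := by
    apply selfAdj_of
    have h1 : vᵀ * ηm = ηm * v := by
      rw [hv]; exact sa_of_sq A (skewrelA a b c d e f)
    have h2 : hᵀ * ηm = ηm * h := by
      rw [hh, Matrix.transpose_neg, Matrix.neg_mul, sa_of_sq B (skewrelB a b c d e f),
        Matrix.mul_neg]
    rw [hPm, Matrix.transpose_sub, Matrix.sub_mul, Matrix.mul_sub, h1, h2]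
  have hPm2 : Pm * Pm = 1 := by
    rw [hPm, Matrix.sub_mul, Matrix.mul_sub, Matrix.mul_sub, hvv, hhh, hvh0, hhv0,
      sub_zero, zero_sub, sub_neg_eq_add, hvh1]
  have hPmtr : Pm.trace = 0 := by
    rw [hPm, Matrix.trace_sub, htrv, htrh, sub_self]
  -- vector-level facts
  have memv : ∀ z : V4, z ∈ LinearMap.range v.mulVecLin ↔ v *ᵥ z = z :=
    mem_range_proj v hvv
  have memh : ∀ z : V4, z ∈ LinearMap.range h.mulVecLin ↔ h *ᵥ z = z :=
    mem_range_proj h hhh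
  -- η(Âx, y) facts
  have hatevA : ∀ x y : V4, ηb (A *ᵥ x) y = bil (Uex a b c d e f) x y := by
    intro x y; rw [← hA]; exact hat_eval _ x y
  have hatevB : ∀ x y : V4, ηb (B *ᵥ x) y = bil (hodge (Uex a b c d e f)) x y := by
    intro x y; rw [← hB]; exact hat_eval _ x y
  have skewB : ∀ x y : V4, bil (hodge (Uex a b c d e f)) x y
      = -bil (hodge (Uex a b c d e f)) y x := by
    intro x y; rw [hodge_Uex]; exact bil_Uex_skew _ _ _ _ _ _ x y
  have F3A : ∀ z : V4, ηb z (A *ᵥ z) = 0 := by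
    intro z
    rw [ηb_comm, hatevA]
    have := bil_Uex_skew a b c d e f z z
    linarith
  have F3B : ∀ z : V4, ηb z (B *ᵥ z) = 0 := by
    intro z
    rw [ηb_comm, hatevB]
    have := skewB z z
    linarith
  have F1 : ∀ z : V4, ηb (A *ᵥ z) (A *ᵥ z) = -ηb (v *ᵥ z) z := by
    intro z
    rw [hatevA, bil_Uex_skew, ← hatevA, Matrix.mulVec_mulVec, ← hv]
  have F2 : ∀ z : V4, ηb (B *ᵥ z) (B *ᵥ z) = ηb (h *ᵥ z) z := by
    intro z
    rw [hatevB, skewB, ← hatevB, Matrix.mulVec_mulVec]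
    have hBB : B * B = -h := by rw [hh, neg_neg]
    rw [hBB, Matrix.neg_mulVec]
    rw [show ηb (-(h *ᵥ z)) z = -ηb (h *ᵥ z) z by simp only [ηb_eq, Pi.neg_apply]; ring]
    ring
  have orthvh : ∀ x' y' : V4, ηb (v *ᵥ x') (h *ᵥ y') = 0 := by
    intro x' y'
    rw [hsaV, Matrix.mulVec_mulVec, hvh0, Matrix.zero_mulVec, ηb_zero_right]
  -- no timelike vectors in range h
  have nonneg_h : ∀ z : V4, h *ᵥ z = z → 0 ≤ ηb z z := by
    intro z hz
    by_contra hlt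
    push_neg at hlt
    set w := B *ᵥ z with hwdef
    have hqw : ηb w w = ηb z z := by
      rw [hwdef, F2 z, hz]
    have hwz : ηb z w = 0 := F3B z
    have hwne : w ≠ 0 := by
      intro h0
      rw [h0, ηb_zero_zero] at hqw
      linarith
    have := perp_time z w hlt hwz hwne
    linarith
  -- positivity on range h
  have pos_h : ∀ z ∈ LinearMap.range h.mulVecLin, z ≠ 0 → 0 < ηb z z := by
    intro z hz hzne
    have hfix : h *ᵥ z = z := (memh z).mp hz
    have h0 : 0 ≤ ηb z z := nonneg_h z hfix
    rcases lt_or_eq_of_le h0 with h1 | h1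
    · exact h1
    -- degenerate case: show z = 0, contradiction
    exfalso
    apply hzne
    apply eta_self_zero
    intro u
    have hu : u = v *ᵥ u + h *ᵥ u := by
      rw [← Matrix.add_mulVec, hvh1, Matrix.one_mulVec]
    have h2 : ηb z (v *ᵥ u) = 0 := by
      rw [ηb_comm, ← hfix, orthvh]
    have h3 : ηb z (h *ᵥ u) = 0 := by
      set bb := ηb z (h *ᵥ u) with hbb
      set cc := ηb (h *ᵥ u) (h *ᵥ u) with hcc
      have hccn : 0 ≤ cc := by
        apply nonneg_h
        rw [Matrix.mulVec_mulVec, hhh]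
      have hcc1 : (0:ℝ) < 1 + cc := by linarith
      set k := (1 + cc)⁻¹ with hk
      have hkpos : 0 < k := inv_pos.mpr hcc1
      have hk1 : (1 + cc) * k = 1 := mul_inv_cancel₀ (ne_of_gt hcc1)
      have hineq : 0 ≤ 2*(-bb*k)*bb + (-bb*k)^2*cc := by
        have hfix2 : h *ᵥ (z + (-bb*k) • (h *ᵥ u)) = z + (-bb*k) • (h *ᵥ u) := by
          rw [Matrix.mulVec_add, hfix, Matrix.mulVec_smul, Matrix.mulVec_mulVec, hhh]
        have := nonneg_h _ hfix2
        rw [ηb_expand, ← h1] at this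
        linarith
      nlinarith [sq_nonneg bb, mul_pos hkpos hkpos, sq_nonneg (bb*k),
        mul_nonneg (mul_nonneg (le_of_lt hkpos) (sq_nonneg bb)) hccn]
    calc ηb z u = ηb z (v *ᵥ u + h *ᵥ u) := by rw [← hu]
    _ = ηb z (v *ᵥ u) + ηb z (h *ᵥ u) := by simp only [ηb_eq, Pi.add_apply, Pi.sub_apply, Pi.neg_apply, Pi.smul_apply, smul_eq_mul]; ring
    _ = 0 := by rw [h2, h3]; ring
  -- the timelike plane
  have e0q : ηb ![1,0,0,0] ![1,0,0,0] = -1 := by norm_num [ηb_eq, show (![1,0,0,0] : V4) 2 = 0 from rfl, show (![1,0,0,0] : V4) 3 = 0 from rfl]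
  set x0 : V4 := v *ᵥ ![1,0,0,0] with hx0def
  have hx0fix : v *ᵥ x0 = x0 := by
    rw [hx0def, Matrix.mulVec_mulVec, hvv]
  have hqx0 : ηb x0 x0 ≤ -1 := by
    obtain ⟨u0, hu0⟩ : ∃ u0 : V4, u0 = h *ᵥ ![1,0,0,0] := ⟨_, rfl⟩
    have hdec : (![1,0,0,0] : V4) = x0 + u0 := by
      rw [hx0def, hu0, ← Matrix.add_mulVec, hvh1, Matrix.one_mulVec]
    have hexp : ηb ![1,0,0,0] ![1,0,0,0]
        = ηb x0 x0 + 2*ηb x0 u0 + ηb u0 u0 := by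
      nth_rewrite 1 [hdec]
      nth_rewrite 1 [hdec]
      rw [ηb_add_add]
    have hcross : ηb x0 u0 = 0 := by
      rw [hx0def, hu0, orthvh]
    have hhe0 : 0 ≤ ηb u0 u0 := by
      apply nonneg_h
      rw [hu0, Matrix.mulVec_mulVec, hhh]
    rw [e0q, hcross] at hexp
    linarith
  set c0 := Real.sqrt (-ηb x0 x0) with hc0
  have hc0pos : 0 < c0 := Real.sqrt_pos.mpr (by linarith)
  have hc0sq : c0^2 = -ηb x0 x0 := Real.sq_sqrt (by linarith)
  set x : V4 := c0⁻¹ • x0 with hxdef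
  have hqx : ηb x x = -1 := by
    rw [hxdef, ηb_smul_smul]
    rw [show ηb x0 x0 = -c0^2 by rw [hc0sq]; ring]
    field_simp
  have hxfix : v *ᵥ x = x := by
    rw [hxdef, Matrix.mulVec_smul, hx0fix]
  set y : V4 := A *ᵥ x with hydef
  have hqy : ηb y y = 1 := by
    rw [hydef, F1, hxfix, ηb_comm, hqx]; ring
  have hxy : ηb x y = 0 := by rw [hydef]; exact F3A x
  have hyfix : v *ᵥ y = y := by
    rw [hydef, Matrix.mulVec_mulVec, hv,
      show (A * A) * A = A * (A * A) from (Matrix.mul_assoc A A A),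
      ← hv, ← Matrix.mulVec_mulVec, hxfix]
  have hAy : A *ᵥ y = x := by
    rw [hydef, Matrix.mulVec_mulVec, ← hv, hxfix]
  have hyA : y = A *ᵥ x := hydef
  clear_value y
  clear hydef
  clear_value x
  clear hxdef hqx0 hx0fix hc0pos hc0sq
  clear_value x0 c0
  -- the span property
  have hrange : LinearMap.range v.mulVecLin = Submodule.span ℝ {x, y} := by
    apply le_antisymm
    · intro z hz
      have hzfix : v *ᵥ z = z := (memv z).mp hz
      set p := ηb z x with hp
      set q' := ηb z y with hq'
      set w : V4 := z + p • x - q' • y with hwdef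
      have hwx : ηb w x = 0 := by
        rw [hwdef, ηb_comb, ← hp, hqx, ηb_comm y x, hxy]
        ring
      have hwy : ηb w y = 0 := by
        rw [hwdef, ηb_comb, ← hq', hqy, hxy]
        ring
      have hwfix : v *ᵥ w = w := by
        simp only [hwdef, Matrix.mulVec_sub, Matrix.mulVec_add, Matrix.mulVec_smul,
          hzfix, hxfix, hyfix]
      have hw0 : w = 0 := by
        by_contra hwne
        have hqwpos : 0 < ηb w w := perp_time x w (by rw [hqx]; norm_num)
          (by rw [ηb_comm]; exact hwx) hwne
        set w' : V4 := A *ᵥ w with hw'def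
        have hqw' : ηb w' w' = -ηb w w := by
          rw [hw'def, F1, hwfix]
        have hw'ne : w' ≠ 0 := by
          intro h0
          rw [h0, ηb_zero_zero] at hqw'
          linarith
        have horth : ηb x w' = 0 := by
          rw [hw'def, ηb_comm, hatevA, bil_Uex_skew, ← hatevA, ← hyA, ηb_comm]
          rw [hwy]; ring
        have := perp_time x w' (by rw [hqx]; norm_num) horth hw'ne
        linarith
      have hzeq : z = q' • y - p • x := by
        have : z + p • x - q' • y = 0 := by rw [← hwdef, hw0]
        funext i
        have := congrFun this i
        simp at this ⊢
        linarith
      rw [hzeq]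
      apply Submodule.sub_mem
      · exact Submodule.smul_mem _ _
          (Submodule.subset_span (Set.mem_insert_of_mem _ rfl))
      · exact Submodule.smul_mem _ _ (Submodule.subset_span (Set.mem_insert _ _))
    · rw [Submodule.span_le]
      intro z hz
      simp only [Set.mem_insert_iff, Set.mem_singleton_iff] at hz
      rcases hz with rfl | rfl
      · exact (memv _).mpr hxfix
      · exact (memv _).mpr hyfix
  exact ⟨hvh1, hvv, hhh, hvh0, hhv0, htrv, htrh, hsaV, hsaH,
    ⟨x, y, hqx, hqy, hxy, hrange⟩, pos_h, hsaPm, hPm2, hPmtr⟩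
end
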